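/- arXiv:2509.11838 — 3 statements merged into one kernel-verified Lean document; each statement's English description precedes it below -/
import Mathlib

section
/- Let μ be a probability measure on ℝ with continuous cumulative distribution function, let ε ∈ (0,1), and let R_1, ..., R_m, R_{m+1} be independent random variables each with law μ. Set ℓ := ⌈(m+1)(1−ε)⌉ and assume ℓ ≤ m, and let R_(ℓ) denote the ℓ-th smallest value among R_1, ..., R_m. Then the joint probability over all m+1 samples satisfies Pr[R_{m+1} ≤ R_(ℓ)] ≥ 1 − ε. -/
open MeasureTheory ProbabilityTheory

/-- The `ℓ`-th smallest element (1-indexed) of a finite multiset of reals. -/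
noncomputable def orderStat (ℓ : ℕ) (s : Multiset ℝ) : ℝ :=
  (s.sort (· ≤ ·)).getD (ℓ - 1) 0

open scoped ENNReal

lemma sorted_le_getD_iff (L : List ℝ) (hL : L.Pairwise (· ≤ ·)) (k : ℕ)
    (hk : k < L.length) (r : ℝ) :
    r ≤ L.getD k 0 ↔ L.countP (fun x => decide (x < r)) ≤ k := by
  induction L generalizing k with
  | nil => simp at hk
  | cons a T ih =>
    rcases List.pairwise_cons.mp hL with ⟨ha, hT⟩
    by_cases hr : a < r
    · cases k with
      | zero =>
        have h1 : ¬ r ≤ a := not_le.mpr hr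
        simp [List.countP_cons, hr, h1]
      | succ k' =>
        have hk' : k' < T.length := by simpa using hk
        rw [List.getD_cons_succ, ih hT k' hk', List.countP_cons]
        simp [hr]
    · have h0 : (a :: T).countP (fun x => decide (x < r)) = 0 := by
        rw [List.countP_eq_zero]
        intro x hx
        rcases List.mem_cons.mp hx with rfl | hx
        · simpa using hr
        · simp only [decide_eq_true_eq, not_lt]
          exact le_trans (not_lt.mp hr) (ha x hx)
      rw [h0]
      refine iff_of_true ?_ (Nat.zero_le _)
      cases k with
      | zero => simpa using not_lt.mp hr
      | succ k' =>
        have hk' : k' < T.length := by simpa using hk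
        rw [List.getD_cons_succ, List.getD_eq_getElem _ _ hk']
        exact le_trans (not_lt.mp hr) (ha _ (List.getElem_mem hk'))

lemma sorted_getD_countP_le (L : List ℝ) (hL : L.Pairwise (· ≤ ·)) (k : ℕ)
    (hk : k < L.length) :
    k + 1 ≤ L.countP (fun x => decide (x ≤ L.getD k 0)) := by
  induction L generalizing k with
  | nil => simp at hk
  | cons a T ih =>
    rcases List.pairwise_cons.mp hL with ⟨ha, hT⟩
    cases k with
    | zero =>
      simp [List.countP_cons]
    | succ k' =>
      have hk' : k' < T.length := by simpa using hk
      have hmem : a ≤ T.getD k' 0 := by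
        rw [List.getD_eq_getElem _ _ hk']
        exact ha _ (List.getElem_mem hk')
      rw [List.getD_cons_succ, List.countP_cons]
      have := ih hT k' hk'
      simp only [decide_eq_true_eq, hmem, if_pos]
      omega

lemma le_orderStat_iff (s : Multiset ℝ) (ℓ : ℕ) (h1 : 1 ≤ ℓ) (h2 : ℓ ≤ Multiset.card s)
    (r : ℝ) :
    r ≤ orderStat ℓ s ↔ s.countP (fun x => x < r) < ℓ := by
  have hsort := s.pairwise_sort (· ≤ ·)
  have hlen : (s.sort (· ≤ ·)).length = Multiset.card s := s.length_sort _
  have hk : ℓ - 1 < (s.sort (· ≤ ·)).length := by omega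
  have hcount : s.countP (fun x => x < r)
      = (s.sort (· ≤ ·)).countP (fun x => decide (x < r)) := by
    conv_lhs => rw [← s.sort_eq (· ≤ ·)]
    exact Multiset.coe_countP _ _
  rw [orderStat, sorted_le_getD_iff _ hsort _ hk, hcount]
  omega

lemma orderStat_countP_ge (s : Multiset ℝ) (ℓ : ℕ) (h1 : 1 ≤ ℓ) (h2 : ℓ ≤ Multiset.card s) :
    ℓ ≤ s.countP (fun x => x ≤ orderStat ℓ s) := by
  have hsort := s.pairwise_sort (· ≤ ·)
  have hlen : (s.sort (· ≤ ·)).length = Multiset.card s := s.length_sort _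
  have hk : ℓ - 1 < (s.sort (· ≤ ·)).length := by omega
  set t := orderStat ℓ s with ht
  have hcount : s.countP (fun x => x ≤ t)
      = (s.sort (· ≤ ·)).countP (fun x => decide (x ≤ t)) := by
    conv_lhs => rw [← s.sort_eq (· ≤ ·)]
    exact Multiset.coe_countP _ _
  have h := sorted_getD_countP_le _ hsort _ hk
  have htv : t = (s.sort (· ≤ ·)).getD (ℓ - 1) 0 := rfl
  rw [hcount, htv]
  omega

/-- The cumulative distribution function of a measure `μ` on `ℝ`: `F(r) = μ((-∞, r])`. -/
noncomputable def cdfFn (μ : Measure ℝ) (r : ℝ) : ℝ :=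
  (μ (Set.Iic r)).toReal

/-- **Marginal conformal guarantee.** If `R_1, ..., R_m, R_{m+1}` are i.i.d. with law `μ`
whose CDF is continuous, `ε ∈ (0,1)`, `ℓ = ⌈(m+1)(1-ε)⌉` and `ℓ ≤ m`, then the joint
probability over all `m + 1` samples satisfies `Pr[R_{m+1} ≤ R_(ℓ)] ≥ 1 - ε`, where
`R_(ℓ)` is the ℓ-th smallest value among `R_1, ..., R_m`. -/
theorem conformal_marginal_guarantee
    {Ω : Type*} [MeasurableSpace Ω] (P : Measure Ω) [IsProbabilityMeasure P]
    (μ : Measure ℝ) [IsProbabilityMeasure μ]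
    (hF : Continuous (cdfFn μ))
    (ε : ℝ) (hε : ε ∈ Set.Ioo (0 : ℝ) 1)
    (m : ℕ)
    (R : Fin (m + 1) → Ω → ℝ)
    (hmeas : ∀ i, Measurable (R i))
    (hindep : iIndepFun R P)
    (hlaw : ∀ i, Measure.map (R i) P = μ)
    (ℓ : ℕ) (hℓdef : ℓ = ⌈((m : ℝ) + 1) * (1 - ε)⌉₊) (hℓm : ℓ ≤ m) :
    (P {ω | R (Fin.last m) ω
        ≤ orderStat ℓ (Multiset.map (fun i : Fin m => R i.castSucc ω) Finset.univ.val)}).toReal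
      ≥ 1 - ε := by
  classical
  obtain ⟨hε0, hε1⟩ := hε
  have hℓ1 : 1 ≤ ℓ := by
    rw [hℓdef]
    have hpos : (0:ℝ) < ((m:ℝ) + 1) * (1 - ε) := by
      have : (0:ℝ) < 1 - ε := by linarith
      positivity
    exact Nat.ceil_pos.mpr hpos
  have hℓle : ((m:ℝ) + 1) * (1 - ε) ≤ ℓ := by rw [hℓdef]; exact Nat.le_ceil _
  let X : Ω → (Fin (m+1) → ℝ) := fun ω i => R i ω
  have hXmeas : Measurable X := measurable_pi_lambda _ hmeas
  set ν : Measure (Fin (m+1) → ℝ) := Measure.pi (fun _ => μ) with hν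
  have hX : Measure.map X P = ν := by
    refine (Measure.pi_eq fun s hs => ?_).symm
    rw [Measure.map_apply hXmeas (MeasurableSet.univ_pi hs)]
    have hpre : X ⁻¹' Set.univ.pi s = ⋂ i ∈ Finset.univ, R i ⁻¹' s i := by
      ext ω; simp [X, Set.mem_pi]
    rw [hpre, hindep.measure_inter_preimage_eq_mul Finset.univ (fun i _ => hs i)]
    exact Finset.prod_congr rfl fun i _ => by rw [← hlaw i, Measure.map_apply (hmeas i) (hs i)]
  set N : Fin (m+1) → (Fin (m+1) → ℝ) → ℕ :=
    fun j x => (Finset.univ.filter (fun i => x i < x j)).card with hNdef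
  have hNmeas : ∀ j, Measurable (N j) := by
    intro j
    have hfe : N j = fun x => ∑ i : Fin (m+1), if x i < x j then 1 else 0 := by
      funext x; exact Finset.card_filter _ _
    rw [hfe]
    exact Finset.measurable_sum _ fun i _ =>
      Measurable.ite (measurableSet_lt (measurable_pi_apply i) (measurable_pi_apply j))
        measurable_const measurable_const
  set A : Fin (m+1) → Set (Fin (m+1) → ℝ) := fun j => {x | N j x < ℓ} with hAdef
  have hAmeas : ∀ j, MeasurableSet (A j) := by
    intro j
    have hAe : A j = N j ⁻¹' (Set.Iio ℓ) := rfl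
    rw [hAe]
    exact (hNmeas j) trivial
  -- reindexing the count by a permutation
  have hNcomp : ∀ (f : Fin (m+1) ≃ Fin (m+1)) (k : Fin (m+1)) (x : Fin (m+1) → ℝ),
      N k (x ∘ f) = N (f k) x := by
    intro f k x
    refine Finset.card_bij (fun i _ => f i) ?_ ?_ ?_
    · intro a ha
      simp only [Finset.mem_filter, Finset.mem_univ, true_and, Function.comp_apply] at ha ⊢
      exact ha
    · intro a _ b _ hab; exact f.injective hab
    · intro b hb
      refine ⟨f.symm b, ?_, by simp⟩
      simp only [Finset.mem_filter, Finset.mem_univ, true_and, Function.comp_apply,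
        Equiv.apply_symm_apply] at hb ⊢
      exact hb
  -- all events have the same probability, by exchangeability
  have hswap : ∀ j, ν (A j) = ν (A (Fin.last m)) := by
    intro j
    set e : Fin (m+1) ≃ Fin (m+1) := Equiv.swap (Fin.last m) j with he
    have hmp := MeasureTheory.measurePreserving_piCongrLeft (fun _ : Fin (m+1) => μ) e
    set T := MeasurableEquiv.piCongrLeft (fun _ : Fin (m+1) => ℝ) e with hT
    have happ : ∀ x : Fin (m+1) → ℝ, T x = x ∘ e.symm := by
      intro x; funext i
      conv_lhs => rw [← e.apply_symm_apply i]
      exact MeasurableEquiv.piCongrLeft_apply_apply (β := fun _ : Fin (m+1) => ℝ) e x (e.symm i)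
    have key : T ⁻¹' (A j) = A (Fin.last m) := by
      ext x
      simp only [Set.mem_preimage, hAdef, Set.mem_setOf_eq, happ x]
      rw [hNcomp e.symm j x]
      have : e.symm j = Fin.last m := by
        rw [he, Equiv.symm_swap, Equiv.swap_apply_right]
      rw [this]
    calc ν (A j) = (Measure.map T ν) (A j) := by rw [hmp.map_eq]
      _ = ν (T ⁻¹' (A j)) := Measure.map_apply T.measurable (hAmeas j)
      _ = ν (A (Fin.last m)) := by rw [key]
  -- pointwise: at least ℓ indices j have rank N j x < ℓ
  have hcard : ∀ x : Fin (m+1) → ℝ, ℓ ≤ (Finset.univ.filter (fun j => N j x < ℓ)).card := by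
    intro x
    set s : Multiset ℝ := Multiset.map x Finset.univ.val with hs
    have hscard : Multiset.card s = m + 1 := by simp [hs]
    have h2 : ℓ ≤ Multiset.card s := by omega
    set t := orderStat ℓ s with htdef
    have hCP : ∀ (p : ℝ → Prop) [DecidablePred p],
        s.countP p = (Finset.univ.filter (fun j => p (x j))).card := by
      intro p _
      rw [hs, Multiset.countP_map]
      simp [Finset.card, Finset.filter]
    have h1 : s.countP (fun v => v < t) < ℓ := (le_orderStat_iff s ℓ hℓ1 h2 t).mp le_rfl
    have h3 : ℓ ≤ s.countP (fun v => v ≤ t) := orderStat_countP_ge s ℓ hℓ1 h2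
    have hsub : Finset.univ.filter (fun j => x j ≤ t)
        ⊆ Finset.univ.filter (fun j => N j x < ℓ) := by
      intro j hj
      simp only [Finset.mem_filter, Finset.mem_univ, true_and] at hj ⊢
      have hle : N j x ≤ s.countP (fun v => v < t) := by
        rw [hCP (fun v => v < t)]
        exact Finset.card_le_card
          (Finset.monotone_filter_right _ (fun i _ hi => lt_of_lt_of_le hi hj))
      omega
    calc ℓ ≤ s.countP (fun v => v ≤ t) := h3
      _ = (Finset.univ.filter (fun j => x j ≤ t)).card := hCP _
      _ ≤ _ := Finset.card_le_card hsub
  -- summing the measures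
  have hsum : (ℓ : ℝ≥0∞) ≤ ∑ j : Fin (m+1), ν (A j) := by
    set g : Fin (m+1) → (Fin (m+1) → ℝ) → ℝ≥0∞ := fun j => (A j).indicator 1 with hg
    have hmeasind : ∀ j ∈ Finset.univ, Measurable (g j) :=
      fun j _ => measurable_one.indicator (hAmeas j)
    calc (ℓ:ℝ≥0∞) = ∫⁻ _, (ℓ:ℝ≥0∞) ∂ν := by simp
      _ ≤ ∫⁻ x, ∑ j : Fin (m+1), g j x ∂ν := by
          apply lintegral_mono
          intro x
          show (ℓ:ℝ≥0∞) ≤ ∑ j : Fin (m+1), g j x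
          have hx : ∑ j : Fin (m+1), g j x
              = ((Finset.univ.filter (fun j => N j x < ℓ)).card : ℝ≥0∞) := by
            rw [Finset.card_filter, Nat.cast_sum]
            refine Finset.sum_congr rfl fun j _ => ?_
            by_cases hjx : N j x < ℓ <;> simp [hg, hAdef, Set.indicator, hjx]
          rw [hx]
          exact_mod_cast Nat.cast_le.mpr (hcard x)
      _ = ∑ j : Fin (m+1), ∫⁻ x, g j x ∂ν := lintegral_finset_sum _ hmeasind
      _ = ∑ j : Fin (m+1), ν (A j) :=
          Finset.sum_congr rfl fun j _ => lintegral_indicator_one (hAmeas j)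
  have htotal : (ℓ : ℝ≥0∞) ≤ ((m:ℝ≥0∞) + 1) * ν (A (Fin.last m)) := by
    refine hsum.trans_eq ?_
    rw [Finset.sum_congr rfl fun j _ => hswap j, Finset.sum_const, Finset.card_univ,
      Fintype.card_fin, nsmul_eq_mul]
    push_cast
    ring
  -- identify the event
  have hev : {ω | R (Fin.last m) ω
        ≤ orderStat ℓ (Multiset.map (fun i : Fin m => R i.castSucc ω) Finset.univ.val)}
      = X ⁻¹' (A (Fin.last m)) := by
    ext ω
    simp only [Set.mem_setOf_eq, Set.mem_preimage, hAdef]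
    set r := R (Fin.last m) ω with hr
    set s : Multiset ℝ := Multiset.map (fun i : Fin m => R i.castSucc ω) Finset.univ.val with hs
    have hscard : Multiset.card s = m := by simp [hs]
    have h2 : ℓ ≤ Multiset.card s := by omega
    rw [le_orderStat_iff s ℓ hℓ1 h2 r]
    have hc : s.countP (fun v => v < r) = N (Fin.last m) (X ω) := by
      rw [hs, Multiset.countP_map]
      show Multiset.card (Multiset.filter (fun a : Fin m => R a.castSucc ω < r) Finset.univ.val)
          = (Finset.filter (fun i : Fin (m+1) => R i ω < r) Finset.univ).card
      rw [Fin.univ_castSuccEmb, Finset.filter_cons, if_neg (lt_irrefl r),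
        Finset.filter_map, Finset.card_map]
      simp only [Finset.card, Finset.filter]
      congr 1
    rw [hc]
  have hP : P {ω | R (Fin.last m) ω
        ≤ orderStat ℓ (Multiset.map (fun i : Fin m => R i.castSucc ω) Finset.univ.val)}
      = ν (A (Fin.last m)) := by
    rw [hev, ← Measure.map_apply hXmeas (hAmeas _), hX]
  rw [hP]
  set p : ℝ≥0∞ := ν (A (Fin.last m)) with hp
  have hpt : p ≠ ⊤ := measure_ne_top ν _
  have hreal : (ℓ:ℝ) ≤ ((m:ℝ) + 1) * p.toReal := by
    have hfin : ((m:ℝ≥0∞) + 1) * p ≠ ⊤ :=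
      ENNReal.mul_ne_top (by simp [ENNReal.add_ne_top]) hpt
    have := ENNReal.toReal_mono hfin htotal
    rw [ENNReal.toReal_mul] at this
    have e : ((m:ℝ≥0∞) + 1).toReal = (m:ℝ) + 1 := by
      rw [ENNReal.toReal_add (by simp) (by simp)]; simp
    simpa [e] using this
  have hn0 : (0:ℝ) < (m:ℝ) + 1 := by positivity
  have hfinal : ((m:ℝ) + 1) * (1 - ε) ≤ ((m:ℝ) + 1) * p.toReal := le_trans hℓle hreal
  exact (mul_le_mul_iff_right₀ hn0).mp hfinal
end

section
/- Let μ be a probability measure on ℝ^{n₀}, let f : ℝ^{n₀} → ℝⁿ be measurable, fix a center c ∈ ℝⁿ and positive normalization factors τ_1, ..., τ_n > 0, and define the nonconformity score R(x) = max_{1 ≤ k ≤ n} |f(x)(k) − c(k)|/τ_k. Let x_1, ..., x_m be independent random variables with law μ, set R_i = R(x_i), and assume the common law of the scores R_i has continuous cumulative distribution function. For 1 ≤ ℓ ≤ m let R_(ℓ) denote the ℓ-th smallest score. Then for every ε ∈ (0,1), the probability over the calibration sample x_1, ..., x_m that μ{x : c(k) − τ_k R_(ℓ) ≤ f(x)(k)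 ≤ c(k) + τ_k R_(ℓ) for all k = 1, ..., n} ≥ 1 − ε is at least 1 − I_{1−ε}(ℓ, m+1−ℓ), where I_x(a,b) is the regularized incomplete beta function. That is, the hyper-rectangular reachable set produced by the naive conformal-inference technique satisfies the ⟨ε, ℓ, m⟩ guarantee. -/
open MeasureTheory ProbabilityTheory

/-- Density of the Beta distribution with shape parameters `a, b`. -/
noncomputable def betaPDF (a b : ℝ) (x : ℝ) : ENNReal :=
  ENNReal.ofReal
    (if x ∈ Set.Icc (0 : ℝ) 1 then
      x ^ (a - 1) * (1 - x) ^ (b - 1) / (Real.Gamma a * Real.Gamma b / Real.Gamma (a + b))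
    else 0)

/-- The Beta distribution with shape parameters `a, b`. -/
noncomputable def betaMeasure (a b : ℝ) : Measure ℝ :=
  volume.withDensity (_root_.betaPDF a b)

/-- The regularized incomplete beta function `I_x(a, b)`: the CDF of `Beta(a,b)` at `x`. -/
noncomputable def regIncBeta (a b x : ℝ) : ℝ :=
  (_root_.betaMeasure a b (Set.Iic x)).toReal

/-- The nonconformity score of `y ∈ ℝⁿ` relative to a center `c` and positive
normalization factors `τ`: `max_{1 ≤ k ≤ n} |y(k) - c(k)| / τ_k`. -/
noncomputable def nonconformityScore {n : ℕ} [NeZero n] (c τ y : Fin n → ℝ) : ℝ :=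
  Finset.univ.sup' Finset.univ_nonempty fun k => |y k - c k| / τ k

section AuxProofs


lemma list_sorted_lt_iff {l : List ℝ} (hl : l.Pairwise (· ≤ ·)) {ℓ : ℕ} (hℓ₁ : 1 ≤ ℓ)
    (hℓm : ℓ ≤ l.length) (q : ℝ) :
    l.getD (ℓ - 1) 0 < q ↔ ℓ ≤ l.countP (fun r => decide (r < q)) := by
  have hlt : ℓ - 1 < l.length := by omega
  have hmono : ∀ i j (hi : i < l.length) (hj : j < l.length), i ≤ j → l[i] ≤ l[j] := by
    intro i j hi hj hij
    rcases eq_or_lt_of_le hij with h' | h'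
    · subst h'; exact le_refl _
    · exact List.pairwise_iff_getElem.mp hl i j hi hj h'
  rw [List.getD_eq_getElem l 0 hlt]
  constructor
  · intro h
    have htake : l.countP (fun r => decide (r < q)) =
        (l.take ℓ).countP (fun r => decide (r < q)) +
        (l.drop ℓ).countP (fun r => decide (r < q)) := by
      rw [← List.countP_append, List.take_append_drop]
    have h1 : (l.take ℓ).countP (fun r => decide (r < q)) = (l.take ℓ).length := by
      apply List.countP_eq_length.mpr
      intro a ha
      obtain ⟨i, hi, rfl⟩ := List.mem_iff_getElem.mp ha
      have hi' : i < ℓ := by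
        have := hi; rw [List.length_take] at this; omega
      rw [List.getElem_take]
      simp only [decide_eq_true_eq]
      have hil : i < l.length := by omega
      calc l[i] ≤ l[ℓ-1] := hmono i (ℓ-1) hil hlt (by omega)
        _ < q := h
    rw [htake, h1, List.length_take]
    omega
  · intro h
    by_contra hcon
    push_neg at hcon
    have htake : l.countP (fun r => decide (r < q)) =
        (l.take (ℓ-1)).countP (fun r => decide (r < q)) +
        (l.drop (ℓ-1)).countP (fun r => decide (r < q)) := by
      rw [← List.countP_append, List.take_append_drop]
    have h2 : (l.drop (ℓ-1)).countP (fun r => decide (r < q)) = 0 := by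
      apply List.countP_eq_zero.mpr
      intro a ha
      obtain ⟨i, hi, rfl⟩ := List.mem_iff_getElem.mp ha
      rw [List.getElem_drop]
      simp only [decide_eq_true_eq, not_lt]
      have hi' : ℓ - 1 + i < l.length := by
        have := hi; rw [List.length_drop] at this; omega
      calc q ≤ l[ℓ-1] := hcon
        _ ≤ l[ℓ-1+i] := hmono (ℓ-1) (ℓ-1+i) hlt hi' (by omega)
    have h3 : (l.take (ℓ-1)).countP (fun r => decide (r < q)) ≤ ℓ - 1 := by
      calc (l.take (ℓ-1)).countP (fun r => decide (r < q)) ≤ (l.take (ℓ-1)).length :=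
            List.countP_le_length
        _ ≤ ℓ - 1 := by rw [List.length_take]; omega
    omega

lemma orderStat_lt_iff {s : Multiset ℝ} {ℓ : ℕ} (hℓ₁ : 1 ≤ ℓ) (hℓm : ℓ ≤ Multiset.card s)
    (q : ℝ) :
    orderStat ℓ s < q ↔ ℓ ≤ Multiset.countP (fun r => r < q) s := by
  have h1 : Multiset.countP (fun r => r < q) s
      = (s.sort (· ≤ ·)).countP (fun r => decide (r < q)) := by
    conv_lhs => rw [← Multiset.sort_eq s (· ≤ ·)]
    rfl
  rw [h1, orderStat]
  exact list_sorted_lt_iff (Multiset.pairwise_sort s _) hℓ₁ (by rwa [Multiset.length_sort]) q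

lemma binom_term_deriv (m j : ℕ) (C : ℝ) (t : ℝ) :
    HasDerivAt (fun t : ℝ => C * t ^ j * (1 - t) ^ (m - j))
      (C * ((j * t ^ (j-1)) * (1-t) ^ (m-j) - ((m-j) : ℕ) * (t ^ j * (1-t) ^ (m-j-1)))) t := by
  have h1 : HasDerivAt (fun t : ℝ => 1 - t) (-1) t := by
    simpa using (hasDerivAt_id t).const_sub 1
  have h2 := h1.fun_pow (m - j)
  have h3 := (hasDerivAt_pow j t).fun_mul h2
  have h4 := h3.const_mul C
  refine (h4.congr_deriv ?_).congr_of_eventuallyEq (Filter.Eventually.of_forall fun s => ?_)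
  · ring
  · ring

lemma binomTail_hasDeriv (m ℓ : ℕ) (hℓ₁ : 1 ≤ ℓ) (hℓm : ℓ ≤ m) (t : ℝ) :
    HasDerivAt (fun t : ℝ => ∑ j ∈ Finset.Icc ℓ m, (m.choose j : ℝ) * t ^ j * (1 - t) ^ (m - j))
      ((m * Nat.choose (m-1) (ℓ-1) : ℕ) * (t ^ (ℓ - 1) * (1 - t) ^ (m - ℓ))) t := by
  have hterm := fun j (_ : j ∈ Finset.Icc ℓ m) => binom_term_deriv m j (m.choose j : ℝ) t
  have hsum := HasDerivAt.fun_sum hterm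
  refine HasDerivAt.congr_deriv hsum (Eq.symm ?_)
  -- value identity, via telescoping
  set u : ℕ → ℝ := fun j => ((m * Nat.choose (m-1) (j-1) : ℕ) : ℝ) * (t ^ (j-1) * (1-t) ^ (m-j))
    with hu
  have hstep : ∀ j ∈ Finset.Icc ℓ m,
      (m.choose j : ℝ) * ((j * t ^ (j-1)) * (1-t) ^ (m-j)
        - ((m-j) : ℕ) * (t ^ j * (1-t) ^ (m-j-1)))
      = u j - u (j+1) := by
    intro j hj
    rw [Finset.mem_Icc] at hj
    have hj1 : 1 ≤ j := le_trans hℓ₁ hj.1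
    have hm1 : m - 1 + 1 = m := by omega
    have hj1' : j - 1 + 1 = j := by omega
    have e1 : m * Nat.choose (m-1) (j-1) = m.choose j * j := by
      have h := Nat.add_one_mul_choose_eq (m-1) (j-1)
      simp only [Nat.succ_eq_add_one, hm1, hj1'] at h
      exact h
    have e2 : m * Nat.choose (m-1) j = m.choose j * (m - j) := by
      have h1 := Nat.choose_succ_right_eq m j
      have h2 := Nat.add_one_mul_choose_eq (m-1) j
      simp only [Nat.succ_eq_add_one, hm1] at h2
      rw [h2, h1]
    have e3 : m - (j+1) = m - j - 1 := by omega
    have e4 : (j+1) - 1 = j := by omega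
    have E1 : ((m * Nat.choose (m-1) (j-1) : ℕ) : ℝ) = (m.choose j : ℝ) * (j : ℝ) := by
      exact_mod_cast congrArg (Nat.cast : ℕ → ℝ) e1
    have E2 : ((m * Nat.choose (m-1) j : ℕ) : ℝ) = (m.choose j : ℝ) * ((m - j : ℕ) : ℝ) := by
      exact_mod_cast congrArg (Nat.cast : ℕ → ℝ) e2
    rw [hu]
    simp only [e3, e4]
    rw [E1, E2]
    ring
  rw [Finset.sum_congr rfl hstep]
  have htel : ∑ j ∈ Finset.Icc ℓ m, (u j - u (j+1)) = u ℓ - u (m+1) := by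
    rw [← Finset.Ico_add_one_right_eq_Icc, Finset.sum_Ico_eq_sum_range]
    calc ∑ i ∈ Finset.range (m + 1 - ℓ), (u (ℓ + i) - u (ℓ + (i+1)))
        = u (ℓ + 0) - u (ℓ + (m + 1 - ℓ)) :=
          Finset.sum_range_sub' (fun i => u (ℓ + i)) (m + 1 - ℓ)
      _ = u ℓ - u (m+1) := by congr 2 <;> omega
  rw [htel]
  have hz : u (m+1) = 0 := by
    have hc : Nat.choose (m-1) ((m+1)-1) = 0 := Nat.choose_eq_zero_of_lt (by omega)
    rw [hu]
    simp only [hc, Nat.mul_zero, Nat.cast_zero, zero_mul]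
  rw [hz, sub_zero, hu]


lemma binomTail_eq_regIncBeta {m ℓ : ℕ} (hℓ₁ : 1 ≤ ℓ) (hℓm : ℓ ≤ m) {t : ℝ}
    (ht0 : 0 ≤ t) (ht1 : t ≤ 1) :
    ∑ j ∈ Finset.Icc ℓ m, (m.choose j : ℝ) * t ^ j * (1 - t) ^ (m - j)
      = regIncBeta (ℓ : ℝ) ((m : ℝ) + 1 - (ℓ : ℝ)) t := by
  have hm : 1 ≤ m := le_trans hℓ₁ hℓm
  set K : ℕ := m * Nat.choose (m-1) (ℓ-1) with hK
  set D : ℝ → ℝ := fun x => (K : ℝ) * (x ^ (ℓ - 1) * (1 - x) ^ (m - ℓ)) with hD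
  set G : ℝ → ℝ := fun t => ∑ j ∈ Finset.Icc ℓ m, (m.choose j : ℝ) * t ^ j * (1 - t) ^ (m - j)
    with hG
  have hDcont : Continuous D := by fun_prop
  -- FTC
  have hftc : ∫ x in (0:ℝ)..t, D x = G t - G 0 :=
    intervalIntegral.integral_eq_sub_of_hasDerivAt
      (fun x _ => binomTail_hasDeriv m ℓ hℓ₁ hℓm x)
      (hDcont.intervalIntegrable 0 t)
  have hG0 : G 0 = 0 := by
    rw [hG]
    apply Finset.sum_eq_zero
    intro j hj
    rw [Finset.mem_Icc] at hj
    have : (0:ℝ) ^ j = 0 := zero_pow (by omega)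
    rw [this]; ring
  -- Beta side
  set a : ℝ := (ℓ : ℝ) with ha
  set b : ℝ := (m : ℝ) + 1 - (ℓ : ℝ) with hb
  set Bc : ℝ := ((ℓ-1).factorial : ℝ) * ((m-ℓ).factorial : ℝ) / (m.factorial : ℝ) with hBc
  have hBcpos : 0 < Bc := by
    have h1 : (0:ℝ) < ((ℓ-1).factorial : ℝ) := by exact_mod_cast Nat.factorial_pos _
    have h2 : (0:ℝ) < ((m-ℓ).factorial : ℝ) := by exact_mod_cast Nat.factorial_pos _
    have h3 : (0:ℝ) < (m.factorial : ℝ) := by exact_mod_cast Nat.factorial_pos _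
    exact div_pos (mul_pos h1 h2) h3
  set gfun : ℝ → ℝ := fun x => x ^ (ℓ - 1) * (1 - x) ^ (m - ℓ) / Bc with hgfun
  have hgcont : Continuous gfun := by fun_prop
  -- the pdf is the indicator of gfun
  have hpdf : ∀ x, _root_.betaPDF a b x = ENNReal.ofReal (Set.indicator (Set.Icc (0:ℝ) 1) gfun x) := by
    intro x
    rw [_root_.betaPDF, Set.indicator_apply]
    congr 1
    by_cases hx : x ∈ Set.Icc (0:ℝ) 1
    · rw [if_pos hx, if_pos hx]
      have hGa : Real.Gamma a = ((ℓ-1).factorial : ℝ) := by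
        have : a = ((ℓ-1 : ℕ) : ℝ) + 1 := by
          rw [ha]; push_cast [Nat.cast_sub hℓ₁]; ring
        rw [this, Real.Gamma_nat_eq_factorial]
      have hGb : Real.Gamma b = ((m-ℓ).factorial : ℝ) := by
        have : b = ((m-ℓ : ℕ) : ℝ) + 1 := by
          rw [hb]; push_cast [Nat.cast_sub hℓm]; ring
        rw [this, Real.Gamma_nat_eq_factorial]
      have hGab : Real.Gamma (a + b) = (m.factorial : ℝ) := by
        have : a + b = (m : ℝ) + 1 := by rw [ha, hb]; ring
        rw [this, Real.Gamma_nat_eq_factorial]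
      have hxa : x ^ (a - 1) = x ^ (ℓ - 1 : ℕ) := by
        have h1 : a - 1 = ((ℓ - 1 : ℕ) : ℝ) := by
          rw [ha]; push_cast [Nat.cast_sub hℓ₁]; ring
        rw [h1, Real.rpow_natCast]
      have hxb : (1 - x) ^ (b - 1) = (1 - x) ^ (m - ℓ : ℕ) := by
        have h1 : b - 1 = ((m - ℓ : ℕ) : ℝ) := by
          rw [hb]; push_cast [Nat.cast_sub hℓm]; ring
        rw [h1, Real.rpow_natCast]
      rw [hGa, hGb, hGab, hxa, hxb, hgfun, hBc]
    · rw [if_neg hx, if_neg hx]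
  -- compute the measure of Iic t
  have hgnonneg : ∀ x ∈ Set.Icc (0:ℝ) 1, 0 ≤ gfun x := by
    intro x hx
    obtain ⟨hx0, hx1⟩ := hx
    apply div_nonneg _ hBcpos.le
    apply mul_nonneg (pow_nonneg hx0 _) (pow_nonneg (by linarith) _)
  have hindnonneg : ∀ x, 0 ≤ Set.indicator (Set.Icc (0:ℝ) 1) gfun x :=
    fun x => Set.indicator_nonneg hgnonneg x
  have hint : Integrable (Set.indicator (Set.Icc (0:ℝ) 1) gfun) volume := by
    rw [integrable_indicator_iff measurableSet_Icc]
    exact hgcont.integrableOn_Icc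
  have hmeas : _root_.betaMeasure a b (Set.Iic t)
      = ENNReal.ofReal (∫ x in Set.Iic t, Set.indicator (Set.Icc (0:ℝ) 1) gfun x) := by
    rw [_root_.betaMeasure, withDensity_apply _ measurableSet_Iic]
    have : ∀ᵐ x ∂(volume.restrict (Set.Iic t)),
        _root_.betaPDF a b x = ENNReal.ofReal (Set.indicator (Set.Icc (0:ℝ) 1) gfun x) :=
      Filter.Eventually.of_forall hpdf
    rw [lintegral_congr_ae this]
    rw [← ofReal_integral_eq_lintegral_ofReal hint.restrict
      (Filter.Eventually.of_forall hindnonneg)]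
  have hsetint : ∫ x in Set.Iic t, Set.indicator (Set.Icc (0:ℝ) 1) gfun x
      = ∫ x in (0:ℝ)..t, gfun x := by
    rw [setIntegral_indicator measurableSet_Icc]
    have hseteq : Set.Iic t ∩ Set.Icc (0:ℝ) 1 = Set.Icc 0 t := by
      ext y
      simp only [Set.mem_inter_iff, Set.mem_Iic, Set.mem_Icc]
      constructor
      · rintro ⟨h1, h2, h3⟩; exact ⟨h2, h1⟩
      · rintro ⟨h1, h2⟩; exact ⟨h2, h1, le_trans h2 ht1⟩
    rw [hseteq, MeasureTheory.integral_Icc_eq_integral_Ioc,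
      ← intervalIntegral.integral_of_le ht0]
  -- identify the constants
  have hKBc : (K : ℝ) = 1 / Bc := by
    have hfact := Nat.choose_mul_factorial_mul_factorial (show ℓ - 1 ≤ m - 1 by omega)
    have hsub : m - 1 - (ℓ - 1) = m - ℓ := by omega
    rw [hsub] at hfact
    have hmm : m * (m-1).factorial = m.factorial := by
      have : m = (m - 1) + 1 := by omega
      rw [this, Nat.factorial_succ]
      congr 1 <;> omega
    have hfact2 : K * ((ℓ-1).factorial * (m-ℓ).factorial) = m.factorial := by
      rw [hK]
      calc m * Nat.choose (m-1) (ℓ-1) * ((ℓ-1).factorial * (m-ℓ).factorial)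
          = m * ((m-1).choose (ℓ-1) * ((ℓ-1).factorial * (m-ℓ).factorial)) := by ring
        _ = m * (m-1).factorial := by
            congr 1; rw [← mul_assoc]; exact hfact
        _ = m.factorial := hmm
    have hfact2R : (K : ℝ) * (((ℓ-1).factorial : ℝ) * ((m-ℓ).factorial : ℝ))
        = (m.factorial : ℝ) := by exact_mod_cast congrArg (Nat.cast : ℕ → ℝ) hfact2
    rw [hBc]
    field_simp
    linarith [hfact2R]
  have hDg : D = gfun := by
    funext y
    rw [hD, hgfun, hKBc]
    field_simp
  -- put it all together
  rw [regIncBeta, hmeas]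
  have hGt : G t = ∫ x in Set.Iic t, (Set.Icc (0:ℝ) 1).indicator gfun x := by
    rw [hsetint, ← hDg, hftc, hG0, sub_zero]
  rw [← hGt, ENNReal.toReal_ofReal (hGt ▸ integral_nonneg hindnonneg)]

lemma measurable_nonconformityScore {n : ℕ} [NeZero n] (c τ : Fin n → ℝ) :
    Measurable (nonconformityScore c τ) := by
  have heq : nonconformityScore c τ
      = Finset.univ.sup' Finset.univ_nonempty (fun k (y : Fin n → ℝ) => |y k - c k| / τ k) := by
    funext y
    rw [nonconformityScore, Finset.sup'_apply]
  rw [heq]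
  exact Finset.measurable_sup' _ fun k _ =>
    ((measurable_pi_apply k).sub measurable_const).abs.div_const _


end AuxProofs

/-- **The naive conformal-inference hyper-rectangular reach set satisfies the
`⟨ε, ℓ, m⟩` guarantee.** Given a calibration sample `x_1, ..., x_m` i.i.d. with law `μ`,
scores `R_i = max_k |f(x_i)(k) - c(k)|/τ_k` whose common law has continuous CDF, and the
ℓ-th smallest score `R_(ℓ)`, for every `ε ∈ (0,1)` the probability over the calibration
sample that the hyper-rectangle `∏_k [c(k) - τ_k R_(ℓ), c(k) + τ_k R_(ℓ)]` covers a
fresh output `f(x)` with probability at least `1 - ε` is at least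
`1 - I_{1-ε}(ℓ, m + 1 - ℓ)`. -/

theorem naive_conformal_reachset_guarantee
    {Ω : Type*} [MeasurableSpace Ω] (P : Measure Ω) [IsProbabilityMeasure P]
    (n₀ n : ℕ) [NeZero n]
    (μ : Measure (Fin n₀ → ℝ)) [IsProbabilityMeasure μ]
    (f : (Fin n₀ → ℝ) → (Fin n → ℝ)) (hf : Measurable f)
    (c : Fin n → ℝ) (τ : Fin n → ℝ) (hτ : ∀ k, 0 < τ k)
    (m : ℕ) (hm : 1 ≤ m)
    (x : Fin m → Ω → (Fin n₀ → ℝ))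
    (hxmeas : ∀ i, Measurable (x i))
    (hindep : iIndepFun x P)
    (hxlaw : ∀ i, Measure.map (x i) P = μ)
    (hcont : Continuous (cdfFn (Measure.map (fun z => nonconformityScore c τ (f z)) μ)))
    (ℓ : ℕ) (hℓ₁ : 1 ≤ ℓ) (hℓm : ℓ ≤ m)
    (ε : ℝ) (hε : ε ∈ Set.Ioo (0 : ℝ) 1) :
    (P {ω |
        (1 : ℝ) - ε ≤
          (μ {z | ∀ k,
            c k - τ k * orderStat ℓ
                (Multiset.map (fun i => nonconformityScore c τ (f (x i ω))) Finset.univ.val)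
              ≤ f z k
            ∧ f z k ≤
              c k + τ k * orderStat ℓ
                (Multiset.map (fun i => nonconformityScore c τ (f (x i ω))) Finset.univ.val)
            }).toReal}).toReal
      ≥ 1 - regIncBeta (ℓ : ℝ) ((m : ℝ) + 1 - (ℓ : ℝ)) (1 - ε) := by
  obtain ⟨hε0, hε1⟩ := hε
  have hg : Measurable (fun z : Fin n₀ → ℝ => nonconformityScore c τ (f z)) :=
    (measurable_nonconformityScore c τ).comp hf
  set ν : Measure ℝ := Measure.map (fun z => nonconformityScore c τ (f z)) μ with hν
  have hνprob : IsProbabilityMeasure ν := Measure.isProbabilityMeasure_map hg.aemeasurable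
  have hFeq : cdfFn ν = ⇑(ProbabilityTheory.cdf ν) := by
    funext r; rw [cdfFn, ProbabilityTheory.cdf_eq_real, measureReal_def]
  have hFmono : Monotone (cdfFn ν) := by rw [hFeq]; exact ProbabilityTheory.monotone_cdf ν
  -- existence of a point q where the cdf equals 1 - ε
  obtain ⟨q, hqF⟩ : ∃ q : ℝ, cdfFn ν q = 1 - ε := by
    have h1 := ProbabilityTheory.tendsto_cdf_atBot (μ := ν)
    have h2 := ProbabilityTheory.tendsto_cdf_atTop (μ := ν)
    rw [← hFeq] at h1 h2
    obtain ⟨a, ha⟩ := (h1.eventually_lt_const (by linarith : (0:ℝ) < 1 - ε)).exists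
    obtain ⟨b, hb⟩ := (h2.eventually_const_lt (by linarith : (1:ℝ) - ε < 1)).exists
    have hab : a ≤ b := le_of_lt (hFmono.reflect_lt (lt_trans ha hb))
    obtain ⟨q, _, hq⟩ := intermediate_value_Icc hab hcont.continuousOn
      (Set.mem_Icc.mpr ⟨ha.le, hb.le⟩)
    exact ⟨q, hq⟩
  have hIic : ν (Set.Iic q) = ENNReal.ofReal (1 - ε) := by
    rw [← hqF, cdfFn, ENNReal.ofReal_toReal (measure_ne_top ν _)]
  -- the cdf being continuous, ν has no atom at q
  have hsingleton : ν {q} = 0 := by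
    have key : ∀ k : ℕ, (ν {q}).toReal ≤ cdfFn ν q - cdfFn ν (q - 1/(k+1)) := by
      intro k
      have hpos : (0:ℝ) < 1/(k+1) := by positivity
      have hsub : {q} ⊆ Set.Iic q \ Set.Iic (q - 1/(k+1)) := by
        intro y hy
        rw [Set.mem_singleton_iff] at hy
        subst hy
        exact ⟨Set.mem_Iic.mpr (le_refl y), by simp only [Set.mem_Iic, not_le]; linarith⟩
      have hdiff : ν (Set.Iic q \ Set.Iic (q - 1/(k+1)))
          = ν (Set.Iic q) - ν (Set.Iic (q - 1/(k+1))) :=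
        measure_diff (Set.Iic_subset_Iic.mpr (by linarith))
          measurableSet_Iic.nullMeasurableSet (measure_ne_top _ _)
      have h1 := measure_mono (μ := ν) hsub
      rw [hdiff] at h1
      have h2 := ENNReal.toReal_mono (by
        exact ne_top_of_le_ne_top (measure_ne_top ν _) tsub_le_self) h1
      refine le_trans h2 ?_
      rw [ENNReal.toReal_sub_of_le (measure_mono (Set.Iic_subset_Iic.mpr (by linarith)))
        (measure_ne_top _ _)]
      exact le_refl _
    have hlim : Filter.Tendsto (fun k : ℕ => cdfFn ν q - cdfFn ν (q - 1/(k+1)))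
        Filter.atTop (nhds 0) := by
      have h1 : Filter.Tendsto (fun k : ℕ => q - 1/(k+1)) Filter.atTop (nhds q) := by
        have := tendsto_one_div_add_atTop_nhds_zero_nat (𝕜 := ℝ)
        have h2 := Filter.Tendsto.sub (tendsto_const_nhds (x := q)) this
        simpa using h2
      have h2 := (hcont.tendsto q).comp h1
      have h3 := Filter.Tendsto.sub (tendsto_const_nhds (x := cdfFn ν q)) h2
      simpa using h3
    have h0 : (ν {q}).toReal ≤ 0 := ge_of_tendsto hlim (Filter.Eventually.of_forall key)
    have h1 : (ν {q}).toReal = 0 := le_antisymm h0 ENNReal.toReal_nonneg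
    exact (ENNReal.toReal_eq_zero_iff _).mp h1 |>.resolve_right (measure_ne_top _ _)
  have hIio : ν (Set.Iio q) = ENNReal.ofReal (1 - ε) := by
    apply le_antisymm
    · rw [← hIic]; exact measure_mono Set.Iio_subset_Iic_self
    · rw [← hIic]
      calc ν (Set.Iic q) ≤ ν (Set.Iio q ∪ {q}) := by
            apply measure_mono
            intro y hy
            rcases lt_or_eq_of_le (Set.mem_Iic.mp hy) with h | h
            · exact Or.inl h
            · exact Or.inr h
        _ ≤ ν (Set.Iio q) + ν {q} := measure_union_le _ _
        _ = ν (Set.Iio q) := by rw [hsingleton, add_zero]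
  -- the score random variables
  classical
  set R : Fin m → Ω → ℝ := fun i ω => nonconformityScore c τ (f (x i ω)) with hR
  have hRmeas : ∀ i, Measurable (R i) := fun i => hg.comp (hxmeas i)
  have hRindep : iIndepFun R P :=
    hindep.comp (fun _ z => nonconformityScore c τ (f z)) (fun _ => hg)
  have hRlaw : ∀ i, Measure.map (R i) P = ν := by
    intro i
    have h1 : R i = (fun z => nonconformityScore c τ (f z)) ∘ (x i) := rfl
    rw [h1, ← Measure.map_map hg (hxmeas i), hxlaw i]
  have hPlt : ∀ i, P ((R i) ⁻¹' (Set.Iio q)) = ENNReal.ofReal (1 - ε) := by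
    intro i
    rw [← Measure.map_apply (hRmeas i) measurableSet_Iio, hRlaw i, hIio]
  have hPge : ∀ i, P (((R i) ⁻¹' (Set.Iio q))ᶜ) = ENNReal.ofReal ε := by
    intro i
    rw [prob_compl_eq_one_sub ((hRmeas i) measurableSet_Iio), hPlt i,
      ← ENNReal.ofReal_one, ← ENNReal.ofReal_sub 1 (by linarith : (0:ℝ) ≤ 1 - ε)]
    norm_num
  -- the events indexed by subsets
  set E : Finset (Fin m) → Set Ω := fun S => {ω | ∀ i, (i ∈ S ↔ R i ω < q)} with hE
  have hEeq : ∀ S, E S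
      = ⋂ i, (if i ∈ S then (R i) ⁻¹' (Set.Iio q) else ((R i) ⁻¹' (Set.Iio q))ᶜ) := by
    intro S
    ext ω
    simp only [hE, Set.mem_setOf_eq, Set.mem_iInter]
    constructor
    · intro h i
      by_cases hi : i ∈ S
      · rw [if_pos hi]; exact Set.mem_preimage.mpr (Set.mem_Iio.mpr ((h i).mp hi))
      · rw [if_neg hi]
        intro hmem
        exact hi ((h i).mpr (Set.mem_Iio.mp (Set.mem_preimage.mp hmem)))
    · intro h i
      by_cases hi : i ∈ S
      · have := h i; rw [if_pos hi] at this
        exact ⟨fun _ => Set.mem_Iio.mp (Set.mem_preimage.mp this), fun _ => hi⟩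
      · have := h i; rw [if_neg hi] at this
        exact ⟨fun h' => absurd h' hi,
          fun hlt => absurd (Set.mem_preimage.mpr (Set.mem_Iio.mpr hlt)) this⟩
  have hEmeas : ∀ S, MeasurableSet (E S) := by
    intro S
    rw [hEeq S]
    apply MeasurableSet.iInter
    intro i
    by_cases hi : i ∈ S
    · rw [if_pos hi]; exact (hRmeas i) measurableSet_Iio
    · rw [if_neg hi]; exact ((hRmeas i) measurableSet_Iio).compl
  have hPE : ∀ S : Finset (Fin m),
      P (E S) = ENNReal.ofReal (1-ε) ^ S.card * ENNReal.ofReal ε ^ (m - S.card) := by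
    intro S
    rw [hEeq S]
    rw [hRindep.meas_iInter (fun i => ?_)]
    swap
    · by_cases hi : i ∈ S
      · rw [if_pos hi]; exact ⟨Set.Iio q, measurableSet_Iio, rfl⟩
      · rw [if_neg hi]
        exact ⟨(Set.Iio q)ᶜ, measurableSet_Iio.compl, by rw [Set.preimage_compl]⟩
    have hval : ∀ i : Fin m,
        P (if i ∈ S then (R i) ⁻¹' (Set.Iio q) else ((R i) ⁻¹' (Set.Iio q))ᶜ)
        = if i ∈ S then ENNReal.ofReal (1-ε) else ENNReal.ofReal ε := by
      intro i
      by_cases hi : i ∈ S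
      · rw [if_pos hi, if_pos hi]; exact hPlt i
      · rw [if_neg hi, if_neg hi]; exact hPge i
    rw [Finset.prod_congr rfl (fun i _ => hval i), Finset.prod_ite, Finset.prod_const,
      Finset.prod_const]
    have h1 : (Finset.univ.filter (fun i => i ∈ S)).card = S.card := by
      congr 1; ext i; simp
    have h2 : (Finset.univ.filter (fun i => ¬ i ∈ S)).card = m - S.card := by
      have he : Finset.univ.filter (fun i => ¬ i ∈ S) = Sᶜ := by ext i; simp
      rw [he, Finset.card_compl, Fintype.card_fin]
    rw [h1, h2]
  -- the "bad" event B : at least ℓ of the scores are < q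
  set 𝒮 : Finset (Finset (Fin m)) :=
    Finset.univ.powerset.filter (fun S : Finset (Fin m) => ℓ ≤ S.card) with h𝒮
  set B : Set Ω := ⋃ S ∈ 𝒮, E S with hB
  have hBmeas : MeasurableSet B := by
    rw [hB]
    exact MeasurableSet.biUnion (Finset.countable_toSet 𝒮) (fun S _ => hEmeas S)
  have hdisj : Set.PairwiseDisjoint (↑𝒮 : Set (Finset (Fin m))) E := by
    intro S _ T _ hST
    apply Set.disjoint_left.mpr
    intro ω hωS hωT
    apply hST
    ext i
    rw [hE] at hωS hωT
    exact (hωS i).trans (hωT i).symm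
  have hPB : P B = ∑ S ∈ 𝒮, P (E S) := by
    rw [hB]
    exact measure_biUnion_finset hdisj (fun S _ => hEmeas S)
  -- sum evaluation by grouping according to cardinality
  have hsum : P B = ∑ j ∈ Finset.Icc ℓ m,
      (m.choose j : ENNReal) * (ENNReal.ofReal (1-ε) ^ j * ENNReal.ofReal ε ^ (m - j)) := by
    rw [hPB, Finset.sum_congr rfl (fun S _ => hPE S)]
    have h𝒮eq : 𝒮 = (Finset.Icc ℓ m).biUnion
        (fun j => Finset.powersetCard j (Finset.univ : Finset (Fin m))) := by
      ext S
      rw [h𝒮]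
      simp only [Finset.mem_filter, Finset.mem_powerset, Finset.mem_biUnion, Finset.mem_Icc,
        Finset.mem_powersetCard_univ]
      constructor
      · intro hS
        exact ⟨S.card, ⟨hS.2, le_trans (Finset.card_le_card (Finset.subset_univ S))
          (le_of_eq (by simp))⟩, rfl⟩
      · rintro ⟨j, ⟨hj1, _⟩, rfl⟩
        exact ⟨Finset.subset_univ S, hj1⟩
    rw [h𝒮eq, Finset.sum_biUnion ?hdisj2]
    case hdisj2 =>
      intro j _ k _ hjk
      apply Finset.disjoint_left.mpr
      intro S hSj hSk
      apply hjk
      rw [← (Finset.mem_powersetCard.mp hSj).2, ← (Finset.mem_powersetCard.mp hSk).2]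
    apply Finset.sum_congr rfl
    intro j hj
    have hterm : ∀ S ∈ Finset.powersetCard j (Finset.univ : Finset (Fin m)),
        ENNReal.ofReal (1-ε) ^ S.card * ENNReal.ofReal ε ^ (m - S.card)
        = ENNReal.ofReal (1-ε) ^ j * ENNReal.ofReal ε ^ (m - j) := by
      intro S hS
      rw [(Finset.mem_powersetCard.mp hS).2]
    rw [Finset.sum_congr rfl hterm, Finset.sum_const, Finset.card_powersetCard,
      Finset.card_univ, Fintype.card_fin, nsmul_eq_mul]
  -- toReal of P B is the binomial tail, i.e. the regularized incomplete beta function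
  have hPBreal : (P B).toReal = regIncBeta (ℓ : ℝ) ((m : ℝ) + 1 - (ℓ : ℝ)) (1 - ε) := by
    have hbinom := binomTail_eq_regIncBeta hℓ₁ hℓm
      (t := 1 - ε) (by linarith) (by linarith)
    rw [hsum, ← hbinom, ENNReal.toReal_sum (fun j _ => ?_)]
    swap
    · exact ENNReal.mul_ne_top (ENNReal.natCast_ne_top _)
        (ENNReal.mul_ne_top (ENNReal.pow_ne_top ENNReal.ofReal_ne_top)
          (ENNReal.pow_ne_top ENNReal.ofReal_ne_top))
    apply Finset.sum_congr rfl
    intro j _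
    rw [ENNReal.toReal_mul, ENNReal.toReal_mul, ENNReal.toReal_pow, ENNReal.toReal_pow,
      ENNReal.toReal_ofReal (by linarith : (0:ℝ) ≤ 1 - ε),
      ENNReal.toReal_ofReal (le_of_lt hε0), ENNReal.toReal_natCast]
    have h1 : (1:ℝ) - (1 - ε) = ε := by ring
    rw [h1]
    ring
  -- identify B with the order-statistic event
  have hBeq : B = {ω | orderStat ℓ
      (Multiset.map (fun i => R i ω) Finset.univ.val) < q} := by
    ext ω
    have hcard : Multiset.card (Multiset.map (fun i => R i ω) Finset.univ.val) = m := by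
      rw [Multiset.card_map]
      simp
    have hcount : Multiset.countP (fun r => r < q)
        (Multiset.map (fun i => R i ω) Finset.univ.val)
        = (Finset.univ.filter (fun i => R i ω < q)).card := by
      rw [Multiset.countP_map]
      rfl
    simp only [Set.mem_setOf_eq]
    rw [orderStat_lt_iff hℓ₁ (by rw [hcard]; exact hℓm) q, hcount]
    constructor
    · intro hω
      obtain ⟨S, hS, hωS⟩ := Set.mem_iUnion₂.mp hω
      have hfe : Finset.univ.filter (fun i => R i ω < q) = S := by
        ext i
        simp only [Finset.mem_filter, Finset.mem_univ, true_and]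
        rw [hE] at hωS
        exact (hωS i).symm
      rw [hfe]
      rw [h𝒮, Finset.mem_filter] at hS
      exact hS.2
    · intro h
      apply Set.mem_iUnion₂.mpr
      refine ⟨Finset.univ.filter (fun i => R i ω < q), ?_, ?_⟩
      · rw [h𝒮, Finset.mem_filter]
        exact ⟨Finset.mem_powerset.mpr (Finset.subset_univ _), h⟩
      · rw [hE]
        intro i
        simp only [Finset.mem_filter, Finset.mem_univ, true_and]
  -- the coverage probability equals the cdf at the order statistic
  have hcover : ∀ r : ℝ,
      (μ {z | ∀ k, c k - τ k * r ≤ f z k ∧ f z k ≤ c k + τ k * r}).toReal = cdfFn ν r := by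
    intro r
    have hset : {z | ∀ k, c k - τ k * r ≤ f z k ∧ f z k ≤ c k + τ k * r}
        = (fun z => nonconformityScore c τ (f z)) ⁻¹' (Set.Iic r) := by
      ext z
      simp only [Set.mem_setOf_eq, Set.mem_preimage, Set.mem_Iic]
      rw [nonconformityScore, Finset.sup'_le_iff]
      constructor
      · intro h k _
        have hk := h k
        rw [div_le_iff₀ (hτ k), abs_le]
        constructor
        · linarith [hk.1]
        · linarith [hk.2]
      · intro h k
        have hk := h k (Finset.mem_univ k)
        rw [div_le_iff₀ (hτ k), abs_le] at hk
        constructor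
        · linarith [hk.1]
        · linarith [hk.2]
    rw [hset, ← Measure.map_apply hg measurableSet_Iic]
    rfl
  -- final assembly
  have hsubset : Bᶜ ⊆ {ω |
        (1 : ℝ) - ε ≤
          (μ {z | ∀ k,
            c k - τ k * orderStat ℓ
                (Multiset.map (fun i => nonconformityScore c τ (f (x i ω))) Finset.univ.val)
              ≤ f z k
            ∧ f z k ≤
              c k + τ k * orderStat ℓ
                (Multiset.map (fun i => nonconformityScore c τ (f (x i ω))) Finset.univ.val)
            }).toReal} := by
    intro ω hω
    rw [Set.mem_compl_iff, hBeq, Set.mem_setOf_eq, not_lt] at hω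
    show (1 : ℝ) - ε ≤ _
    rw [hcover (orderStat ℓ (Multiset.map (fun i => R i ω) Finset.univ.val))]
    calc (1:ℝ) - ε = cdfFn ν q := hqF.symm
      _ ≤ _ := hFmono hω
  have hPBle : P B ≤ 1 := prob_le_one
  have h1 : P Bᶜ = 1 - P B := prob_compl_eq_one_sub hBmeas
  have h2 : (P Bᶜ).toReal = 1 - (P B).toReal := by
    rw [h1, ENNReal.toReal_sub_of_le hPBle ENNReal.one_ne_top, ENNReal.toReal_one]
  have h3 := ENNReal.toReal_mono (measure_ne_top P _) (measure_mono hsubset)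
  rw [h2, hPBreal] at h3
  exact h3
end

section
/- Let μ be a probability measure on ℝ^{n₀} supported in a set I ⊆ ℝ^{n₀}, let f, g : ℝ^{n₀} → ℝⁿ be measurable maps with g(x) ∈ T for all x ∈ I for some set T ⊆ ℝⁿ, and define the approximation error q(x) = f(x) − g(x). Fix a center c ∈ ℝⁿ and positive factors τ_1, ..., τ_n > 0 and define the score R(x) = max_{1 ≤ k ≤ n} |q(x)(k) − c(k)|/τ_k. Let x_1, ..., x_m be independent with law μ, set R_i = R(x_i), assume their common law has continuous cumulative distribution function, and let R_(ℓ) be the ℓ-th smallest score for 1 ≤ ℓ ≤ m. Then for every ε ∈ (0,1), with probability at least 1 − I_{1−ε}(ℓ, m+1−ℓ) over the calibration sample, one has μ{x : f(x) ∈ T ⊕ H} ≥ 1 − ε, where H = ∏_{k=1}^n [c(k) − τ_k R_(ℓ), c(k) + τ_k R_(ℓ)] is the inflating hyper-rectangle and ⊕ denotes the Minkowski sum. That is, the surrogate-based reachable set T ⊕ H for f satisfies the ⟨ε, ℓ, m⟩ guarantee. -/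
open MeasureTheory ProbabilityTheory Pointwise

section AuxLemmas
open intervalIntegral
open scoped Classical

lemma beta_int_sum (b : ℕ) : ∀ (a : ℕ) (t : ℝ),
    (((a+b+1).factorial : ℝ)) * ∫ x in (0:ℝ)..t, x^a * (1-x)^b
    = (a.factorial : ℝ) * (b.factorial : ℝ) *
      ∑ j ∈ Finset.Icc (a+1) (a+b+1), ((a+b+1).choose j : ℝ) * t^j * (1-t)^(a+b+1-j) := by
  induction b with
  | zero =>
    intro a t
    have : Finset.Icc (a+1) (a+0+1) = {a+1} := by simp
    rw [this]
    simp only [pow_zero, mul_one, Finset.sum_singleton, Nat.choose_self]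
    rw [integral_pow]
    have ha : (a:ℝ) + 1 ≠ 0 := by positivity
    rw [Nat.factorial_succ]
    push_cast
    field_simp
    simp
  | succ b ih =>
    intro a t
    set I1 := ∫ x in (0:ℝ)..t, x^a * (1-x)^(b+1) with hI1
    set I2 := ∫ x in (0:ℝ)..t, x^(a+1) * (1-x)^b with hI2
    have key : (a+1:ℝ) * I1 = t^(a+1)*(1-t)^(b+1) + (b+1:ℝ) * I2 := by
      have hderiv : ∀ y ∈ Set.uIcc (0:ℝ) t,
          HasDerivAt (fun x : ℝ => x^(a+1) * (1-x)^(b+1))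
            ((a+1:ℝ) * y^a * (1-y)^(b+1) - (b+1:ℝ) * (y^(a+1) * (1-y)^b)) y := by
        intro y _
        have h1 : HasDerivAt (fun x : ℝ => x^(a+1)) ((a+1:ℝ) * y^a) y := by
          simpa using hasDerivAt_pow (a+1) y
        have h2 : HasDerivAt (fun x : ℝ => (1-x)^(b+1)) (-((b+1:ℝ) * (1-y)^b)) y := by
          have := (hasDerivAt_pow (b+1) (1-y)).comp y ((hasDerivAt_id y).const_sub 1)
          simpa [Function.comp_def] using this
        have := h1.mul h2
        exact this.congr_deriv (by ring)
      have hcont : Continuous (fun y : ℝ =>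
          (a+1:ℝ) * y^a * (1-y)^(b+1) - (b+1:ℝ) * (y^(a+1) * (1-y)^b)) := by continuity
      have hint := integral_eq_sub_of_hasDerivAt hderiv (hcont.intervalIntegrable _ _)
      have hu : Continuous (fun y : ℝ => (a+1:ℝ) * y^a * (1-y)^(b+1)) := by continuity
      have hv : Continuous (fun y : ℝ => (b+1:ℝ) * (y^(a+1) * (1-y)^b)) := by continuity
      rw [integral_sub (hu.intervalIntegrable _ _) (hv.intervalIntegrable _ _)] at hint
      have e1 : (∫ y in (0:ℝ)..t, (a+1:ℝ) * y^a * (1-y)^(b+1)) = (a+1:ℝ) * I1 := by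
        rw [hI1, ← intervalIntegral.integral_const_mul]
        congr 1; ext y; ring
      have e2 : (∫ y in (0:ℝ)..t, (b+1:ℝ) * (y^(a+1) * (1-y)^b)) = (b+1:ℝ) * I2 := by
        rw [hI2, ← intervalIntegral.integral_const_mul]
      rw [e1, e2] at hint
      simp at hint
      linarith [hint]
    have ih' := ih (a+1) t
    have hicc : Finset.Icc (a+1) (a+(b+1)+1) = insert (a+1) (Finset.Icc (a+1+1) (a+(b+1)+1)) := by
      ext j
      simp only [Finset.mem_Icc, Finset.mem_insert]
      omega
    rw [hicc, Finset.sum_insert (by simp)]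
    have hexp : a+(b+1)+1 - (a+1) = b+1 := by omega
    have hmeq : a+1+b+1 = a+(b+1)+1 := by omega
    rw [hexp]
    rw [hmeq] at ih'
    have hc : ((a+(b+1)+1).choose (a+1) : ℝ) * ((a+1).factorial : ℝ) * ((b+1).factorial : ℝ)
        = ((a+(b+1)+1).factorial : ℝ) := by
      have := Nat.choose_mul_factorial_mul_factorial (show a+1 ≤ a+(b+1)+1 by omega)
      have h2 : a+(b+1)+1 - (a+1) = b+1 := by omega
      rw [h2] at this
      exact_mod_cast congrArg (Nat.cast : ℕ → ℝ) this
    have hfa : ((a+1).factorial : ℝ) = ((a:ℝ)+1) * (a.factorial : ℝ) := by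
      rw [Nat.factorial_succ]; push_cast; ring
    have hfb : ((b+1).factorial : ℝ) = ((b:ℝ)+1) * (b.factorial : ℝ) := by
      rw [Nat.factorial_succ]; push_cast; ring
    have ha1 : (a:ℝ)+1 ≠ 0 := by positivity
    -- goal : (a+(b+1)+1)! * I1 = a! * (b+1)! * (C * t^(a+1) * (1-t)^(b+1) + Σ')
    -- derive from key, ih', hc
    have expand : ((a+(b+1)+1).factorial : ℝ) * (((a:ℝ)+1) * I1)
        = ((a:ℝ)+1) * ((a.factorial:ℝ) * ((b+1).factorial:ℝ) *
            (((a+(b+1)+1).choose (a+1) : ℝ) * t^(a+1) * (1-t)^(b+1)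
              + ∑ j ∈ Finset.Icc (a+1+1) (a+(b+1)+1),
                  ((a+(b+1)+1).choose j : ℝ) * t^j * (1-t)^(a+(b+1)+1-j))) := by
      rw [key]
      rw [mul_add, mul_add]
      have hsum : ((a+(b+1)+1).factorial : ℝ) * ((b:ℝ)+1 : ℝ) * I2
          = ((a:ℝ)+1) * ((a.factorial:ℝ) * ((b+1).factorial:ℝ) *
              ∑ j ∈ Finset.Icc (a+1+1) (a+(b+1)+1),
                ((a+(b+1)+1).choose j : ℝ) * t^j * (1-t)^(a+(b+1)+1-j)) := by
        calc ((a+(b+1)+1).factorial : ℝ) * ((b:ℝ)+1) * I2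
            = ((b:ℝ)+1) * (((a+(b+1)+1).factorial : ℝ) * I2) := by ring
          _ = ((b:ℝ)+1) * (((a+1).factorial : ℝ) * (b.factorial : ℝ) *
                ∑ j ∈ Finset.Icc (a+1+1) (a+(b+1)+1),
                  ((a+(b+1)+1).choose j : ℝ) * t^j * (1-t)^(a+(b+1)+1-j)) := by rw [ih']
          _ = _ := by rw [hfa, hfb]; ring
      calc ((a+(b+1)+1).factorial : ℝ) * (t^(a+1)*(1-t)^(b+1))
            + ((a+(b+1)+1).factorial : ℝ) * (((b:ℝ)+1) * I2)
          = (((a+(b+1)+1).choose (a+1) : ℝ) * ((a+1).factorial : ℝ) * ((b+1).factorial : ℝ))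
              * (t^(a+1)*(1-t)^(b+1))
            + ((a+(b+1)+1).factorial : ℝ) * ((b:ℝ)+1) * I2 := by rw [hc]; ring
        _ = _ := by rw [hsum, hfa]; ring
    have := mul_left_cancel₀ ha1 (by linarith [expand] : ((a:ℝ)+1) * (((a+(b+1)+1).factorial : ℝ) * I1) = ((a:ℝ)+1) * ((a.factorial:ℝ) * ((b+1).factorial:ℝ) * (((a+(b+1)+1).choose (a+1) : ℝ) * t^(a+1) * (1-t)^(b+1) + ∑ j ∈ Finset.Icc (a+1+1) (a+(b+1)+1), ((a+(b+1)+1).choose j : ℝ) * t^j * (1-t)^(a+(b+1)+1-j))))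
    calc ((a+(b+1)+1).factorial : ℝ) * I1 = _ := this
      _ = _ := by ring

lemma regIncBeta_nat (a b : ℕ) (t : ℝ) (h0 : 0 ≤ t) (h1 : t ≤ 1) :
    regIncBeta ((a:ℝ)+1) ((b:ℝ)+1) t
      = ∑ j ∈ Finset.Icc (a+1) (a+b+1), ((a+b+1).choose j : ℝ) * t^j * (1-t)^(a+b+1-j) := by
  have hfa : (0:ℝ) < a.factorial := by exact_mod_cast a.factorial_pos
  have hfb : (0:ℝ) < b.factorial := by exact_mod_cast b.factorial_pos
  have hfab : (0:ℝ) < (a+b+1).factorial := by exact_mod_cast (a+b+1).factorial_pos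
  set Bc : ℝ := (a.factorial : ℝ) * (b.factorial : ℝ) / ((a+b+1).factorial : ℝ) with hBc
  have hBcpos : 0 < Bc := by positivity
  set φ : ℝ → ℝ := fun x => x^a * (1-x)^b / Bc with hφ
  have hφcont : Continuous φ := by
    apply Continuous.div_const
    continuity
  have hpdf : _root_.betaPDF ((a:ℝ)+1) ((b:ℝ)+1)
      = fun x => ENNReal.ofReal (Set.indicator (Set.Icc (0:ℝ) 1) φ x) := by
    funext x
    rw [_root_.betaPDF, Set.indicator_apply]
    congr 1
    split
    · have hg1 : Real.Gamma ((a:ℝ)+1) = a.factorial := Real.Gamma_nat_eq_factorial a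
      have hg2 : Real.Gamma ((b:ℝ)+1) = b.factorial := Real.Gamma_nat_eq_factorial b
      have hg3 : Real.Gamma ((a:ℝ)+1+((b:ℝ)+1)) = (a+b+1).factorial := by
        have : ((a:ℝ)+1+((b:ℝ)+1)) = ((a+b+1:ℕ):ℝ)+1 := by push_cast; ring
        rw [this, Real.Gamma_nat_eq_factorial]
      rw [hg1, hg2, hg3]
      have e1 : ((a:ℝ)+1-1) = ((a:ℕ):ℝ) := by ring
      have e2 : ((b:ℝ)+1-1) = ((b:ℕ):ℝ) := by ring
      rw [e1, e2, Real.rpow_natCast, Real.rpow_natCast]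
    · rfl
  have hres : _root_.betaMeasure ((a:ℝ)+1) ((b:ℝ)+1) (Set.Iic t)
      = ∫⁻ x in Set.Iic t, ENNReal.ofReal (Set.indicator (Set.Icc (0:ℝ) 1) φ x) := by
    rw [_root_.betaMeasure, hpdf, withDensity_apply _ measurableSet_Iic]
  have hnn : 0 ≤ᵐ[volume.restrict (Set.Iic t)] Set.indicator (Set.Icc (0:ℝ) 1) φ := by
    refine Filter.Eventually.of_forall ?_
    intro y
    apply Set.indicator_nonneg
    intro z hz
    have : 0 ≤ z^a * (1-z)^b := by
      apply mul_nonneg (pow_nonneg hz.1 a) (pow_nonneg (by linarith [hz.2]) b)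
    positivity
  have hintg : Integrable (Set.indicator (Set.Icc (0:ℝ) 1) φ) (volume.restrict (Set.Iic t)) := by
    apply Integrable.restrict
    exact (hφcont.integrableOn_Icc).integrable_indicator measurableSet_Icc
  have hlint := ofReal_integral_eq_lintegral_ofReal hintg hnn
  have hval : (∫ x in Set.Iic t, Set.indicator (Set.Icc (0:ℝ) 1) φ x)
      = ∫ x in (0:ℝ)..t, φ x := by
    have hset : Set.Icc (0:ℝ) 1 ∩ Set.Iic t = Set.Icc 0 t := by
      ext z
      simp only [Set.mem_inter_iff, Set.mem_Icc, Set.mem_Iic]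
      constructor
      · rintro ⟨⟨hz0, _⟩, hzt⟩; exact ⟨hz0, hzt⟩
      · rintro ⟨hz0, hzt⟩; exact ⟨⟨hz0, le_trans hzt h1⟩, hzt⟩
    rw [MeasureTheory.integral_indicator measurableSet_Icc, Measure.restrict_restrict measurableSet_Icc,
      hset, intervalIntegral.integral_of_le h0, ← integral_Icc_eq_integral_Ioc]
  have hnn2 : 0 ≤ ∫ x in (0:ℝ)..t, φ x := by
    apply intervalIntegral.integral_nonneg h0
    intro z hz
    have h1z : (0:ℝ) ≤ 1 - z := by
      have := hz.2
      simp only [Set.mem_Icc] at hz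
      linarith [hz.2]
    exact div_nonneg (mul_nonneg (pow_nonneg hz.1 _) (pow_nonneg h1z _)) hBcpos.le
  rw [regIncBeta, hres, ← hlint, hval, ENNReal.toReal_ofReal hnn2]
  have hdiv : (∫ x in (0:ℝ)..t, φ x) = (∫ x in (0:ℝ)..t, x^a * (1-x)^b) / Bc := by
    rw [hφ, intervalIntegral.integral_div]
  rw [hdiv]
  have hsum := beta_int_sum b a t
  rw [hBc]
  field_simp
  linarith [hsum]

lemma le_countP_of_orderStat_lt {s : Multiset ℝ} {q : ℝ} {ℓ : ℕ}
    (h1 : 1 ≤ ℓ) (hlen : ℓ ≤ Multiset.card s) (h : orderStat ℓ s < q) :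
    ℓ ≤ Multiset.countP (fun r => r ≤ q) s := by
  classical
  set l := s.sort (· ≤ ·) with hl
  have hsort : l.Pairwise (· ≤ ·) := s.pairwise_sort _
  have hlength : l.length = Multiset.card s := s.length_sort _
  have hidx : ℓ - 1 < l.length := by omega
  have hget : orderStat ℓ s = l[ℓ-1] := by
    rw [orderStat, ← hl, l.getD_eq_getElem 0 hidx]
  have hcount : Multiset.countP (fun r => r ≤ q) s = l.countP (fun r => decide (r ≤ q)) := by
    conv_lhs => rw [← Multiset.sort_eq s (· ≤ ·)]
    rfl
  rw [hcount]
  have htake : ∀ y ∈ l.take ℓ, decide (y ≤ q) = true := by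
    intro y hy
    obtain ⟨i, hi, rfl⟩ := List.mem_iff_getElem.1 hy
    have hil : i < l.length := lt_of_lt_of_le (lt_of_lt_of_le hi (by simp)) le_rfl
    have : (l.take ℓ)[i] = l[i] := List.getElem_take
    rw [this]
    have hile : i ≤ ℓ - 1 := by
      have : i < ℓ := lt_of_lt_of_le hi (by simp [List.length_take])
      omega
    have := hsort.rel_get_of_le (a := ⟨i, hil⟩) (b := ⟨ℓ-1, hidx⟩) (by simpa using hile)
    simp only [List.get_eq_getElem] at this
    simp only [decide_eq_true_eq]
    calc l[i] ≤ l[ℓ-1] := this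
      _ ≤ q := by rw [← hget]; exact le_of_lt h
  have h2 : (l.take ℓ).countP (fun r => decide (r ≤ q)) = (l.take ℓ).length :=
    List.countP_eq_length.2 htake
  have h3 : (l.take ℓ).length = ℓ := by
    rw [List.length_take]
    omega
  have h4 := (List.take_sublist ℓ l).countP_le (p := fun r => decide (r ≤ q))
  omega

lemma binom_count {Ω : Type*} [MeasurableSpace Ω] (P : Measure Ω) [IsProbabilityMeasure P]
    (m ℓ : ℕ) (E : Fin m → Set Ω) (hE : ∀ i, MeasurableSet (E i)) (t : ℝ)
    (ht0 : 0 ≤ t) (ht1 : t ≤ 1)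
    (hPE : ∀ i, P (E i) = ENNReal.ofReal t)
    (hprod : ∀ B : Fin m → Set Ω, (∀ i, B i = E i ∨ B i = (E i)ᶜ) →
      P (⋂ i, B i) = ∏ i, P (B i)) :
    MeasurableSet {ω | ℓ ≤ (Finset.univ.filter fun i => ω ∈ E i).card} ∧
    P {ω | ℓ ≤ (Finset.univ.filter fun i => ω ∈ E i).card}
      = ENNReal.ofReal (∑ j ∈ Finset.Icc ℓ m, (m.choose j : ℝ) * t^j * (1-t)^(m-j)) := by
  classical
  set D : Finset (Fin m) → Set Ω := fun J => ⋂ i, (if i ∈ J then E i else (E i)ᶜ) with hD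
  have hDmeas : ∀ J, MeasurableSet (D J) := by
    intro J
    apply MeasurableSet.iInter
    intro i
    by_cases h : i ∈ J <;> simp [h, hE i, (hE i).compl]
  have hDset : ∀ J ω, ω ∈ D J ↔ (Finset.univ.filter fun i => ω ∈ E i) = J := by
    intro J ω
    simp only [hD, Set.mem_iInter]
    constructor
    · intro h
      ext i
      simp only [Finset.mem_filter, Finset.mem_univ, true_and]
      have := h i
      by_cases hij : i ∈ J <;> simp [hij] at this <;> simp [hij, this]
    · intro h i
      have : i ∈ J ↔ ω ∈ E i := by
        rw [← h]; simp
      by_cases hij : i ∈ J <;> simp [hij]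
      · exact this.1 hij
      · exact fun hc => hij (this.2 hc)
  set 𝒥 : Finset (Finset (Fin m)) := Finset.univ.filter (fun J => ℓ ≤ J.card) with h𝒥
  have hev : {ω | ℓ ≤ (Finset.univ.filter fun i => ω ∈ E i).card}
      = ⋃ J ∈ 𝒥, D J := by
    ext ω
    simp only [Set.mem_setOf_eq, Set.mem_iUnion, h𝒥, Finset.mem_filter, Finset.mem_univ, true_and]
    constructor
    · intro h
      exact ⟨Finset.univ.filter fun i => ω ∈ E i, h, (hDset _ ω).2 rfl⟩
    · rintro ⟨J, hJ, hωJ⟩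
      rw [(hDset J ω).1 hωJ]
      exact hJ
  have hmeas : MeasurableSet {ω | ℓ ≤ (Finset.univ.filter fun i => ω ∈ E i).card} := by
    rw [hev]
    exact Finset.measurableSet_biUnion _ (fun J _ => hDmeas J)
  refine ⟨hmeas, ?_⟩
  have hPcomplE : ∀ i, P (E i)ᶜ = ENNReal.ofReal (1 - t) := by
    intro i
    rw [prob_compl_eq_one_sub (hE i), hPE i, ← ENNReal.ofReal_one,
      ← ENNReal.ofReal_sub _ ht0]
  have hPD : ∀ J : Finset (Fin m),
      P (D J) = ENNReal.ofReal t ^ J.card * ENNReal.ofReal (1 - t) ^ (m - J.card) := by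
    intro J
    rw [hD]
    rw [hprod _ (fun i => by by_cases h : i ∈ J <;> simp [h])]
    rw [← Finset.prod_filter_mul_prod_filter_not Finset.univ (· ∈ J)]
    rw [Finset.filter_univ_mem]
    have e1 : ∀ i ∈ J, P (if i ∈ J then E i else (E i)ᶜ) = ENNReal.ofReal t := by
      intro i hi; simp [hi, hPE i]
    have e2 : ∀ i ∈ Finset.univ.filter (fun i => ¬ i ∈ J),
        P (if i ∈ J then E i else (E i)ᶜ) = ENNReal.ofReal (1 - t) := by
      intro i hi
      simp only [Finset.mem_filter] at hi
      simp [hi.2, hPcomplE i]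
    rw [Finset.prod_congr rfl e1, Finset.prod_congr rfl e2, Finset.prod_const,
      Finset.prod_const]
    congr 1
    have : Finset.univ.filter (fun i => ¬ i ∈ J) = Jᶜ := by
      ext i; simp
    rw [this, Finset.card_compl, Fintype.card_fin]
  -- split by cardinality
  have h𝒥split : 𝒥 = (Finset.Icc ℓ m).biUnion (fun j => Finset.powersetCard j Finset.univ) := by
    ext J
    simp only [h𝒥, Finset.mem_filter, Finset.mem_univ, true_and, Finset.mem_biUnion,
      Finset.mem_Icc, Finset.mem_powersetCard_univ]
    constructor
    · intro h
      exact ⟨J.card, ⟨h, by simpa using Finset.card_le_univ J⟩, rfl⟩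
    · rintro ⟨j, ⟨hj1, _⟩, rfl⟩
      exact hj1
  have hdisj : Set.PairwiseDisjoint ↑𝒥 D := by
    intro J₁ h1 J₂ h2 hne
    simp only [Function.onFun, Set.disjoint_left]
    intro ω hω1 hω2
    exact hne (((hDset J₁ ω).1 hω1).symm.trans ((hDset J₂ ω).1 hω2))
  rw [hev, measure_biUnion_finset hdisj (fun J _ => hDmeas J)]
  have hstep : ∑ J ∈ 𝒥, P (D J)
      = ∑ j ∈ Finset.Icc ℓ m, (m.choose j) •
          (ENNReal.ofReal t ^ j * ENNReal.ofReal (1 - t) ^ (m - j)) := by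
    rw [h𝒥split, Finset.sum_biUnion]
    · apply Finset.sum_congr rfl
      intro j hj
      have : ∀ J ∈ Finset.powersetCard j Finset.univ,
          P (D J) = ENNReal.ofReal t ^ j * ENNReal.ofReal (1 - t) ^ (m - j) := by
        intro J hJ
        rw [hPD J, (Finset.mem_powersetCard_univ.1 hJ)]
      rw [Finset.sum_congr rfl this, Finset.sum_const, Finset.card_powersetCard,
        Finset.card_univ, Fintype.card_fin]
    · intro j₁ h1 j₂ h2 hne
      simp only [Function.onFun, Finset.disjoint_left]
      intro J hJ1 hJ2
      rw [Finset.mem_powersetCard_univ] at hJ1 hJ2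
      exact hne (hJ1 ▸ hJ2 ▸ rfl)
  rw [hstep]
  rw [ENNReal.ofReal_sum_of_nonneg]
  · apply Finset.sum_congr rfl
    intro j hj
    rw [ENNReal.ofReal_mul (by positivity), ENNReal.ofReal_mul (by positivity),
      ENNReal.ofReal_pow ht0, ENNReal.ofReal_pow (by linarith), ENNReal.ofReal_natCast,
      nsmul_eq_mul, mul_assoc]
  · intro j hj
    have : (0:ℝ) ≤ 1 - t := by linarith
    positivity

end AuxLemmas

/-- **The surrogate-based reach set `T ⊕ H` satisfies the `⟨ε, ℓ, m⟩` guarantee.**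
`μ` is supported in `I`, the surrogate `g` satisfies `g(x) ∈ T` on `I`, and the scores
are computed from the approximation error `q(x) = f(x) - g(x)`. With probability at
least `1 - I_{1-ε}(ℓ, m+1-ℓ)` over the i.i.d. calibration sample `x_1, ..., x_m`, the
set `T ⊕ H`, with `H = ∏_k [c(k) - τ_k R_(ℓ), c(k) + τ_k R_(ℓ)]` the inflating
hyper-rectangle built from the ℓ-th smallest score, covers `f(x)` with probability at
least `1 - ε`. -/
theorem surrogate_conformal_reachset_guarantee
    {Ω : Type*} [MeasurableSpace Ω] (P : Measure Ω) [IsProbabilityMeasure P]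
    (n₀ n : ℕ) [NeZero n]
    (μ : Measure (Fin n₀ → ℝ)) [IsProbabilityMeasure μ]
    (I : Set (Fin n₀ → ℝ)) (hsupp : μ Iᶜ = 0)
    (f g : (Fin n₀ → ℝ) → (Fin n → ℝ)) (hf : Measurable f) (hg : Measurable g)
    (T : Set (Fin n → ℝ)) (hT : ∀ x ∈ I, g x ∈ T)
    (c : Fin n → ℝ) (τ : Fin n → ℝ) (hτ : ∀ k, 0 < τ k)
    (m : ℕ) (hm : 1 ≤ m)
    (x : Fin m → Ω → (Fin n₀ → ℝ))
    (hxmeas : ∀ i, Measurable (x i))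
    (hindep : iIndepFun x P)
    (hxlaw : ∀ i, Measure.map (x i) P = μ)
    (hcont : Continuous
      (cdfFn (Measure.map (fun z => nonconformityScore c τ (f z - g z)) μ)))
    (ℓ : ℕ) (hℓ₁ : 1 ≤ ℓ) (hℓm : ℓ ≤ m)
    (ε : ℝ) (hε : ε ∈ Set.Ioo (0 : ℝ) 1) :
    (P {ω |
        (1 : ℝ) - ε ≤
          (μ {z | f z ∈
            T + {w : Fin n → ℝ | ∀ k,
              c k - τ k * orderStat ℓ
                  (Multiset.map
                    (fun i => nonconformityScore c τ (f (x i ω) - g (x i ω)))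
                    Finset.univ.val)
                ≤ w k
              ∧ w k ≤
                c k + τ k * orderStat ℓ
                  (Multiset.map
                    (fun i => nonconformityScore c τ (f (x i ω) - g (x i ω)))
                    Finset.univ.val)}}).toReal}).toReal
      ≥ 1 - regIncBeta (ℓ : ℝ) ((m : ℝ) + 1 - (ℓ : ℝ)) (1 - ε) := by
  classical
  obtain ⟨hε0, hε1⟩ := hε
  -- the score map
  set S : (Fin n₀ → ℝ) → ℝ := fun z => nonconformityScore c τ (f z - g z) with hS
  have hSmeas : Measurable S := by
    have h1 : ∀ k : Fin n, Measurable (fun z => |(f z - g z) k - c k| / τ k) := by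
      intro k
      have : Measurable fun z => (f z - g z) k := (measurable_pi_apply k).comp (hf.sub hg)
      exact ((this.sub measurable_const).abs).div_const (τ k)
    have h2 : Measurable (Finset.univ.sup' (Finset.univ_nonempty (α := Fin n))
        (fun k => fun z => |(f z - g z) k - c k| / τ k)) :=
      Finset.measurable_sup' _ (fun k _ => h1 k)
    have : S = Finset.univ.sup' (Finset.univ_nonempty (α := Fin n))
        (fun k => fun z => |(f z - g z) k - c k| / τ k) := by
      funext z
      have h3 := Finset.sup'_apply (Finset.univ_nonempty (α := Fin n))
        (fun k => fun z => |(f z - g z) k - c k| / τ k) z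
      rw [h3]
      rfl
    rw [this]
    exact h2
  set ν : Measure ℝ := Measure.map S μ with hν
  have hνprob : IsProbabilityMeasure ν := Measure.isProbabilityMeasure_map hSmeas.aemeasurable
  set F : ℝ → ℝ := cdfFn ν with hF
  have hFcont : Continuous F := hcont
  have hFmono : Monotone F := by
    intro r1 r2 h
    exact ENNReal.toReal_mono (measure_ne_top ν _) (measure_mono (Set.Iic_subset_Iic.2 h))
  have hFeq : F = ProbabilityTheory.cdf ν := by
    funext r
    rw [hF, cdfFn, ProbabilityTheory.cdf_eq_real, measureReal_def]
  -- find q with F q = 1 - ε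
  obtain ⟨a, ha⟩ : ∃ a, F a < 1 - ε := by
    have h := (ProbabilityTheory.tendsto_cdf_atBot ν).eventually_lt_const
      (show (0:ℝ) < 1 - ε by linarith)
    rw [← hFeq] at h
    exact h.exists
  obtain ⟨b, hb⟩ : ∃ b, 1 - ε < F b := by
    have h := (ProbabilityTheory.tendsto_cdf_atTop ν).eventually_const_lt
      (show 1 - ε < (1:ℝ) by linarith)
    rw [← hFeq] at h
    exact h.exists
  obtain ⟨q, hq⟩ : ∃ q, F q = 1 - ε := by
    have := intermediate_value_univ a b hFcont
    exact this ⟨le_of_lt ha, le_of_lt hb⟩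
  have ht0 : (0:ℝ) ≤ 1 - ε := by linarith
  have ht1 : 1 - ε ≤ 1 := by linarith
  have hIic : ν (Set.Iic q) = ENNReal.ofReal (1 - ε) := by
    rw [← hq, hF, cdfFn, ENNReal.ofReal_toReal (measure_ne_top ν _)]
  -- events
  set A : Set (Fin n₀ → ℝ) := S ⁻¹' Set.Iic q with hA
  have hAmeas : MeasurableSet A := hSmeas measurableSet_Iic
  set E : Fin m → Set Ω := fun i => x i ⁻¹' A with hE
  have hEmeas : ∀ i, MeasurableSet (E i) := fun i => (hxmeas i) hAmeas
  have hμA : μ A = ENNReal.ofReal (1 - ε) := by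
    rw [hA, ← hIic, hν, Measure.map_apply hSmeas measurableSet_Iic]
  have hPE : ∀ i, P (E i) = ENNReal.ofReal (1 - ε) := by
    intro i
    rw [hE]
    calc P (x i ⁻¹' A) = (Measure.map (x i) P) A := (Measure.map_apply (hxmeas i) hAmeas).symm
      _ = μ A := by rw [hxlaw i]
      _ = ENNReal.ofReal (1 - ε) := hμA
  have hprod : ∀ B : Fin m → Set Ω, (∀ i, B i = E i ∨ B i = (E i)ᶜ) →
      P (⋂ i, B i) = ∏ i, P (B i) := by
    intro B hB
    set sets : Fin m → Set (Fin n₀ → ℝ) := fun i => if B i = E i then A else Aᶜ with hsets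
    have hBeq : ∀ i, B i = x i ⁻¹' sets i := by
      intro i
      rw [hsets]
      by_cases h : B i = E i
      · simp only [h, if_pos h]
        rfl
      · simp only [if_neg h]
        rcases hB i with h' | h'
        · exact absurd h' h
        · rw [h', hE, Set.preimage_compl]
    have hsetsmeas : ∀ i, i ∈ Finset.univ → MeasurableSet (sets i) := by
      intro i _
      rw [hsets]
      by_cases h : B i = E i <;> simp [h, hAmeas, hAmeas.compl]
    have key := hindep.measure_inter_preimage_eq_mul Finset.univ hsetsmeas
    have e1 : (⋂ i ∈ Finset.univ, x i ⁻¹' sets i) = ⋂ i, B i := by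
      ext ω
      simp [hBeq]
    have e2 : ∀ i, P (x i ⁻¹' sets i) = P (B i) := fun i => by rw [← hBeq i]
    rw [e1] at key
    rw [key]
    exact Finset.prod_congr rfl (fun i _ => e2 i)
  obtain ⟨hCmeas, hPC⟩ := binom_count P m ℓ E hEmeas (1 - ε) ht0 ht1 hPE hprod
  set C : Set Ω := {ω | ℓ ≤ (Finset.univ.filter fun i => ω ∈ E i).card} with hC
  -- the subset relation
  set target : Set Ω := {ω |
        (1 : ℝ) - ε ≤
          (μ {z | f z ∈
            T + {w : Fin n → ℝ | ∀ k,
              c k - τ k * orderStat ℓ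
                  (Multiset.map
                    (fun i => nonconformityScore c τ (f (x i ω) - g (x i ω)))
                    Finset.univ.val)
                ≤ w k
              ∧ w k ≤
                c k + τ k * orderStat ℓ
                  (Multiset.map
                    (fun i => nonconformityScore c τ (f (x i ω) - g (x i ω)))
                    Finset.univ.val)}}).toReal} with htarget
  have hsub : Cᶜ ⊆ target := by
    intro ω hω
    rw [Set.mem_compl_iff, hC, Set.mem_setOf_eq, not_le] at hω
    set r : ℝ := orderStat ℓ (Multiset.map
      (fun i => nonconformityScore c τ (f (x i ω) - g (x i ω))) Finset.univ.val) with hr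
    -- q ≤ r
    have hqr : q ≤ r := by
      by_contra hlt
      push_neg at hlt
      have hcnt := le_countP_of_orderStat_lt hℓ₁
        (by rw [Multiset.card_map]; simpa using hℓm) hlt
      rw [Multiset.countP_map] at hcnt
      have heq : Multiset.filter
            (fun i => (fun r => r ≤ q) (nonconformityScore c τ (f (x i ω) - g (x i ω))))
            Finset.univ.val
          = Multiset.filter (fun i => ω ∈ E i) Finset.univ.val := by
        apply Multiset.filter_congr
        intro i _
        exact Iff.rfl
      rw [heq] at hcnt
      have h2 : (Finset.univ.filter fun i => ω ∈ E i).card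
          = Multiset.card (Multiset.filter (fun i => ω ∈ E i) Finset.univ.val) := by
        rw [Finset.card_def, Finset.filter_val]
      omega
    -- coverage
    have hFr : 1 - ε ≤ F r := by
      rw [← hq]
      exact hFmono hqr
    have hsubset : (S ⁻¹' Set.Iic r) ∩ I ⊆
        {z | f z ∈ T + {w : Fin n → ℝ | ∀ k,
          c k - τ k * r ≤ w k ∧ w k ≤ c k + τ k * r}} := by
      rintro z ⟨hzS, hzI⟩
      simp only [Set.mem_preimage, Set.mem_Iic] at hzS
      have hw : (f z - g z) ∈ {w : Fin n → ℝ | ∀ k,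
          c k - τ k * r ≤ w k ∧ w k ≤ c k + τ k * r} := by
        intro k
        have h1 : |(f z - g z) k - c k| / τ k ≤ S z :=
          Finset.le_sup' (fun k => |(f z - g z) k - c k| / τ k) (Finset.mem_univ k)
        have h2 : |(f z - g z) k - c k| ≤ τ k * r := by
          rw [div_le_iff₀ (hτ k)] at h1
          calc |(f z - g z) k - c k| ≤ S z * τ k := h1
            _ ≤ r * τ k := by
                apply mul_le_mul_of_nonneg_right (le_trans hzS le_rfl) (hτ k).le
            _ = τ k * r := by ring
        have h3 := abs_le.1 h2
        constructor <;> [linarith [h3.1]; linarith [h3.2]]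
      have := Set.add_mem_add (hT z hzI) hw
      rwa [add_sub_cancel] at this
    have hchain : ENNReal.ofReal (1 - ε) ≤
        μ {z | f z ∈ T + {w : Fin n → ℝ | ∀ k,
          c k - τ k * r ≤ w k ∧ w k ≤ c k + τ k * r}} := by
      calc ENNReal.ofReal (1 - ε) = ν (Set.Iic q) := hIic.symm
        _ ≤ ν (Set.Iic r) := measure_mono (Set.Iic_subset_Iic.2 hqr)
        _ = μ (S ⁻¹' Set.Iic r) := by rw [hν, Measure.map_apply hSmeas measurableSet_Iic]
        _ = μ ((S ⁻¹' Set.Iic r) ∩ I) := (measure_inter_conull hsupp).symm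
        _ ≤ _ := measure_mono hsubset
    rw [htarget, Set.mem_setOf_eq]
    rw [← hr]
    calc (1:ℝ) - ε = (ENNReal.ofReal (1 - ε)).toReal := by
          rw [ENNReal.toReal_ofReal ht0]
      _ ≤ _ := ENNReal.toReal_mono (measure_ne_top μ _) hchain
  -- conclusion
  have hPG : P Cᶜ = 1 - P C := prob_compl_eq_one_sub hCmeas
  have hPC1 : P C ≤ 1 := prob_le_one
  have hsum_nonneg : 0 ≤ ∑ j ∈ Finset.Icc ℓ m,
      (m.choose j : ℝ) * (1-ε)^j * (1-(1-ε))^(m-j) := by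
    apply Finset.sum_nonneg
    intro j hj
    have : (0:ℝ) ≤ 1 - (1 - ε) := by linarith
    positivity
  have hbeta : regIncBeta (ℓ : ℝ) ((m : ℝ) + 1 - (ℓ : ℝ)) (1 - ε)
      = ∑ j ∈ Finset.Icc ℓ m, (m.choose j : ℝ) * (1-ε)^j * (1-(1-ε))^(m-j) := by
    obtain ⟨a, rfl⟩ : ∃ a, ℓ = a + 1 := ⟨ℓ - 1, by omega⟩
    obtain ⟨b, rfl⟩ : ∃ b, m = a + b + 1 := ⟨m - (a+1), by omega⟩
    have e1 : ((a+1:ℕ) : ℝ) = (a:ℝ) + 1 := by push_cast; ring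
    have e2 : ((a+b+1:ℕ) : ℝ) + 1 - ((a:ℝ) + 1) = (b:ℝ) + 1 := by push_cast; ring
    rw [e1, e2]
    exact regIncBeta_nat a b (1-ε) ht0 ht1
  have hfinal : (P Cᶜ).toReal = 1 - regIncBeta (ℓ : ℝ) ((m : ℝ) + 1 - (ℓ : ℝ)) (1 - ε) := by
    rw [hPG, hPC]
    rw [ENNReal.toReal_sub_of_le (hPC ▸ hPC1) (by simp)]
    rw [ENNReal.toReal_ofReal hsum_nonneg, ENNReal.toReal_one, hbeta]
  rw [ge_iff_le, ← hfinal]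
  exact ENNReal.toReal_mono (measure_ne_top P _) (measure_mono hsub)
end
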